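/- arXiv:1805.07196 — 5 statements merged into one kernel-verified Lean document; each statement's English description precedes it below -/
import Mathlib

section
/- Let G be a PDES with event set Σ = Σc ∪ Σuc (controllable/uncontrollable) and Σ = Σo ∪ Σuo (observable/unobservable), and let L be a probabilistic language with L ⊆ L_G. Then there exists a probabilistic P-supervisor S_p such that L_{S_p/G} = L if and only if there exists a scaling-factor function K such that L_{K/G} = L. -/
open scoped BigOperators

noncomputable section

/-- Chain product: given step weights `w s σ` (interpreted as the conditional
probability of event `σ` after string `s`), `chainProd w pre rest` multiplies the
weights along `rest`, starting from the already-consumed prefix `pre`. -/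
def chainProd {E : Type*} (w : List E → E → ℝ) : List E → List E → ℝ
  | _, [] => 1
  | pre, σ :: rest => w pre σ * chainProd w (pre ++ [σ]) rest

/-- The (probabilistic) language generated by step weights `w`:
`langOf w [] = 1` and `langOf w (s ++ [σ]) = langOf w s * w s σ`. -/
def langOf {E : Type*} (w : List E → E → ℝ) : List E → ℝ := chainProd w []

/-- A probabilistic language over a finite event set `E`. -/
structure PLang (E : Type*) [Fintype E] where
  toFun : List E → ℝ
  nonneg : ∀ s, 0 ≤ toFun s
  le_one : ∀ s, toFun s ≤ 1
  eps : toFun [] = 1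
  step : ∀ s, (∑ σ : E, toFun (s ++ [σ])) ≤ toFun s

/-- `L1` is a probabilistic sublanguage of `L2`. -/
def PSub {E : Type*} (L1 L2 : List E → ℝ) : Prop :=
  (∀ s, 0 < L1 s → 0 < L2 s) ∧
  ∀ s, 0 < L1 s → ∀ σ : E, L1 (s ++ [σ]) / L1 s ≤ L2 (s ++ [σ]) / L2 s

/-- Intersection of probabilistic languages. -/
def pInter {E : Type*} (L1 L2 : List E → ℝ) : List E → ℝ :=
  langOf fun s σ => min (L1 (s ++ [σ]) / L1 s) (L2 (s ++ [σ]) / L2 s)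

/-- Natural projection erasing the events outside the observable set `So`. -/
def proj {E : Type*} [DecidableEq E] (So : Finset E) (s : List E) : List E :=
  s.filter fun σ => decide (σ ∈ So)

/-- A probabilistic discrete event system (probabilistic automaton). -/
structure PDES (X : Type*) (E : Type*) [Fintype E] where
  x0 : X
  trans : X → E → Option X
  prob : X → E → ℝ
  prob_nonneg : ∀ x σ, 0 ≤ prob x σ
  prob_le_one : ∀ x σ, prob x σ ≤ 1
  prob_pos_iff : ∀ x σ, 0 < prob x σ ↔ (trans x σ).isSome
  sum_le_one : ∀ x, (∑ σ : E, prob x σ) ≤ 1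

/-- Extension of the partial transition function to strings. -/
def PDES.transStar {X E : Type*} [Fintype E] (G : PDES X E) (s : List E) : Option X :=
  s.foldl (fun ox σ => ox.bind fun x => G.trans x σ) (some G.x0)

/-- Step weight of a PDES: `ρ(δ(x0,s),σ)` when `δ(x0,s)` is defined, `0` otherwise. -/
def PDES.w {X E : Type*} [Fintype E] (G : PDES X E) (s : List E) (σ : E) : ℝ :=
  (G.transStar s).elim 0 fun x => G.prob x σ

/-- The probabilistic language generated by a PDES. -/
def PDES.lang {X E : Type*} [Fintype E] (G : PDES X E) : List E → ℝ := langOf G.w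

/-- The set of control patterns: subsets of events containing every uncontrollable event. -/
def ControlPatterns {E : Type*} [Fintype E] [DecidableEq E] (Sc : Finset E) :
    Finset (Finset E) :=
  Finset.univ.filter fun θ => Scᶜ ⊆ θ

/-- `Sp` is a probabilistic P-supervisor for `G`: to every observation of a string in the
support of `L_G` it assigns a probability distribution on the control patterns. -/
def IsSupervisor {X E : Type*} [Fintype E] [DecidableEq E] (G : PDES X E)
    (Sc So : Finset E) (Sp : List E → Finset E → ℝ) : Prop :=
  ∀ s : List E, 0 < G.lang s →
    (∀ θ ∈ ControlPatterns Sc, 0 ≤ Sp (proj So s) θ) ∧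
    (∑ θ ∈ ControlPatterns Sc, Sp (proj So s) θ) = 1

/-- The controlled probabilistic language `L_{Sp/G}`. -/
def supLang {X E : Type*} [Fintype E] [DecidableEq E] (G : PDES X E)
    (Sc So : Finset E) (Sp : List E → Finset E → ℝ) : List E → ℝ :=
  langOf fun s σ =>
    G.w s σ * ∑ θ ∈ (ControlPatterns Sc).filter (fun θ => σ ∈ θ), Sp (proj So s) θ

/-- `K` is a scaling-factor function for `G`: on every observation of a string in the
support of `L_G` it takes values in `[0,1]` and equals `1` on uncontrollable events. -/
def IsScaling {X E : Type*} [Fintype E] [DecidableEq E] (G : PDES X E)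
    (Sc So : Finset E) (K : List E → E → ℝ) : Prop :=
  ∀ s : List E, 0 < G.lang s → ∀ σ : E,
    0 ≤ K (proj So s) σ ∧ K (proj So s) σ ≤ 1 ∧ (σ ∉ Sc → K (proj So s) σ = 1)

/-- The controlled probabilistic language `L_{K/G}`. -/
def kLang {X E : Type*} [Fintype E] [DecidableEq E] (G : PDES X E)
    (So : Finset E) (K : List E → E → ℝ) : List E → ℝ :=
  langOf fun s σ => G.w s σ * K (proj So s) σ

/-- Probabilistic controllability (language form). -/
def ProbControllable {E : Type*} (L M : List E → ℝ) (Sc : Finset E) : Prop :=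
  ∀ s : List E, 0 < L s → ∀ σ : E, σ ∉ Sc →
    L (s ++ [σ]) / L s = M (s ++ [σ]) / M s

/-- Probabilistic observability (language form). -/
def ProbObservable {E : Type*} [DecidableEq E] (L M : List E → ℝ)
    (Sc So : Finset E) : Prop :=
  ∀ s1 s2 : List E, 0 < L s1 → 0 < L s2 → proj So s1 = proj So s2 →
    ∀ σ ∈ Sc,
      (M (s1 ++ [σ]) / M s1) * (L (s2 ++ [σ]) / L s2) =
      (M (s2 ++ [σ]) / M s2) * (L (s1 ++ [σ]) / L s1)

/-- Probabilistic controllability (automata form). -/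
def AutControllable {X Q E : Type*} [Fintype E] (G : PDES X E) (H : PDES Q E)
    (Sc : Finset E) : Prop :=
  ∀ s : List E, 0 < H.lang s → ∀ x q,
    G.transStar s = some x → H.transStar s = some q →
    ∀ σ : E, σ ∉ Sc → H.prob q σ = G.prob x σ

/-- Probabilistic observability (automata form). -/
def AutObservable {X Q E : Type*} [Fintype E] [DecidableEq E] (G : PDES X E)
    (H : PDES Q E) (Sc So : Finset E) : Prop :=
  ∀ s1 s2 : List E, 0 < H.lang s1 → 0 < H.lang s2 → proj So s1 = proj So s2 →
    ∀ x1 q1 x2 q2,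
      G.transStar s1 = some x1 → H.transStar s1 = some q1 →
      G.transStar s2 = some x2 → H.transStar s2 = some q2 →
      ∀ σ ∈ Sc, G.prob x1 σ * H.prob q2 σ = G.prob x2 σ * H.prob q1 σ

/-- Reachability in the controllability-testing automaton `G_tc`.
States are pairs `(x,q)` (as `Sum.inl`) together with the special state `d` (`Sum.inr ()`). -/
inductive TcReach {X Q E : Type*} [Fintype E] (G : PDES X E) (H : PDES Q E)
    (Sc : Finset E) : (X × Q) ⊕ Unit → Prop
  | init : TcReach G H Sc (Sum.inl (G.x0, H.x0))
  | good (x q x' q' σ) : TcReach G H Sc (Sum.inl (x, q)) →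
      G.trans x σ = some x' → H.trans q σ = some q' →
      ((σ ∉ Sc ∧ G.prob x σ = H.prob q σ) ∨ σ ∈ Sc) →
      TcReach G H Sc (Sum.inl (x', q'))
  | bad (x q σ) : TcReach G H Sc (Sum.inl (x, q)) →
      σ ∉ Sc → G.prob x σ ≠ H.prob q σ →
      TcReach G H Sc (Sum.inr ())

/-- Reachability in the observability-testing automaton `G_to`.
States are 4-tuples `(x1,q1,x2,q2)` (as `Sum.inl`) together with the special state `d`. -/
inductive ToReach {X Q E : Type*} [Fintype E] (G : PDES X E) (H : PDES Q E)
    (Sc So : Finset E) : (X × Q × X × Q) ⊕ Unit → Prop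
  | init : ToReach G H Sc So (Sum.inl (G.x0, H.x0, G.x0, H.x0))
  | sync (x1 q1 x2 q2 x1' q1' x2' q2' σ) :
      ToReach G H Sc So (Sum.inl (x1, q1, x2, q2)) →
      G.trans x1 σ = some x1' → H.trans q1 σ = some q1' →
      G.trans x2 σ = some x2' → H.trans q2 σ = some q2' →
      (σ ∉ Sc ∨ (σ ∈ Sc ∧ G.prob x1 σ * H.prob q2 σ = G.prob x2 σ * H.prob q1 σ)) →
      ToReach G H Sc So (Sum.inl (x1', q1', x2', q2'))
  | bad (x1 q1 x2 q2 σ) :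
      ToReach G H Sc So (Sum.inl (x1, q1, x2, q2)) →
      σ ∈ Sc → G.prob x1 σ * H.prob q2 σ ≠ G.prob x2 σ * H.prob q1 σ →
      ToReach G H Sc So (Sum.inr ())
  | left (x1 q1 x2 q2 x1' q1' σ) :
      ToReach G H Sc So (Sum.inl (x1, q1, x2, q2)) → σ ∉ So →
      G.trans x1 σ = some x1' → H.trans q1 σ = some q1' →
      ToReach G H Sc So (Sum.inl (x1', q1', x2, q2))
  | right (x1 q1 x2 q2 x2' q2' σ) :
      ToReach G H Sc So (Sum.inl (x1, q1, x2, q2)) → σ ∉ So →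
      G.trans x2 σ = some x2' → H.trans q2 σ = some q2' →
      ToReach G H Sc So (Sum.inl (x1, q1, x2', q2'))

/-- `H` is a probabilistic subautomaton of `G`, as witnessed by the state inclusion `e`. -/
def SubautomatonVia {Q X E : Type*} [Fintype E] (H : PDES Q E) (G : PDES X E)
    (e : Q → X) : Prop :=
  Function.Injective e ∧ e H.x0 = G.x0 ∧
  ∀ q σ, H.prob q σ ≤ G.prob (e q) σ ∧
    ∀ q', H.trans q σ = some q' → G.trans (e q) σ = some (e q')

/-- The product of two PDESs. -/
def PDES.prod {X Q E : Type*} [Fintype E] (G : PDES X E) (H : PDES Q E) :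
    PDES (X × Q) E where
  x0 := (G.x0, H.x0)
  trans := fun p σ => (G.trans p.1 σ).bind fun x => (H.trans p.2 σ).map fun q => (x, q)
  prob := fun p σ => min (G.prob p.1 σ) (H.prob p.2 σ)
  prob_nonneg := fun p σ => le_min (G.prob_nonneg _ _) (H.prob_nonneg _ _)
  prob_le_one := fun p σ => le_trans (min_le_left _ _) (G.prob_le_one _ _)
  prob_pos_iff := by
    intro p σ
    rw [lt_min_iff, G.prob_pos_iff, H.prob_pos_iff]
    cases hG : G.trans p.1 σ <;> cases hH : H.trans p.2 σ <;> simp [hG, hH]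
  sum_le_one := fun p =>
    le_trans (Finset.sum_le_sum fun σ _ => min_le_left _ _) (G.sum_le_one p.1)

end

/-!
A probabilistic supervisor only matters through the probability with which it enables each
event, and this is a scaling-factor function. Conversely, a scaling factor `K` is realised by
the supervisor that enables every event `σ` independently with probability `K σ`: this is a
distribution on control patterns because `∏ σ, (K σ + (1 - K σ)) = 1`, and its marginal on
`σ` is `K σ`.
-/

open Finset

section Language

variable {E : Type*}

theorem chainProd_append_singleton (w : List E → E → ℝ) (pre l : List E) (σ : E) :
    chainProd w pre (l ++ [σ]) = chainProd w pre l * w (pre ++ l) σ := by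
  induction l generalizing pre with
  | nil => simp [chainProd]
  | cons a l ih => simp [chainProd, ih, mul_assoc]

theorem langOf_append_singleton (w : List E → E → ℝ) (s : List E) (σ : E) :
    langOf w (s ++ [σ]) = langOf w s * w s σ :=
  chainProd_append_singleton w [] s σ

theorem langOf_congr {w w' : List E → E → ℝ} (h : ∀ s σ, langOf w s ≠ 0 → w s σ = w' s σ) :
    langOf w = langOf w' := by
  funext s
  induction s using List.reverseRecOn with
  | nil => rfl
  | append_singleton s σ ih =>
    rw [langOf_append_singleton, langOf_append_singleton, ← ih]
    by_cases hs : langOf w s = 0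
    · simp [hs]
    · rw [h s σ hs]

theorem langOf_pos_of_ne_zero {u v : List E → E → ℝ} (h : ∀ s σ, u s σ ≠ 0 → 0 < v s σ)
    (s : List E) (hs : langOf u s ≠ 0) : 0 < langOf v s := by
  induction s using List.reverseRecOn with
  | nil => exact one_pos
  | append_singleton s σ ih =>
    rw [langOf_append_singleton] at hs ⊢
    exact mul_pos (ih (left_ne_zero_of_mul hs)) (h s σ (right_ne_zero_of_mul hs))

end Language

section BernoulliWeight

variable {ι : Type*} [Fintype ι] [DecidableEq ι]

def bernoulliWeight (p : ι → ℝ) (θ : Finset ι) : ℝ :=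
  (∏ i ∈ θ, p i) * ∏ i ∈ θᶜ, (1 - p i)

theorem bernoulliWeight_nonneg {p : ι → ℝ} (h0 : ∀ i, 0 ≤ p i) (h1 : ∀ i, p i ≤ 1)
    (θ : Finset ι) : 0 ≤ bernoulliWeight p θ :=
  mul_nonneg (prod_nonneg fun i _ => h0 i) (prod_nonneg fun i _ => sub_nonneg.2 (h1 i))

theorem bernoulliWeight_eq_zero {p : ι → ℝ} {θ : Finset ι} {i : ι} (hi : i ∉ θ) (hp : p i = 1) :
    bernoulliWeight p θ = 0 :=
  mul_eq_zero_of_right _ (prod_eq_zero (mem_compl.2 hi) (by rw [hp, sub_self]))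

theorem sum_bernoulliWeight (p : ι → ℝ) : ∑ θ, bernoulliWeight p θ = 1 := by
  simp only [bernoulliWeight, ← Fintype.prod_add, add_sub_cancel, prod_const_one]

theorem sum_filter_mem_prod_mul_prod_compl (f g : ι → ℝ) (a : ι) :
    ∑ θ with a ∈ θ, (∏ i ∈ θ, f i) * ∏ i ∈ θᶜ, g i = f a * ∏ i ∈ {a}ᶜ, (f i + g i) := by
  -- killing `g a` makes every pattern without `a` contribute zero
  have hkill (θ : Finset ι) : ∏ i ∈ θᶜ, Function.update g a 0 i =
      if a ∈ θ then ∏ i ∈ θᶜ, g i else 0 := by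
    split_ifs with ha
    · exact prod_congr rfl fun i hi =>
        Function.update_of_ne (by rintro rfl; exact mem_compl.1 hi ha) ..
    · exact prod_eq_zero (mem_compl.2 ha) (Function.update_self ..)
  calc ∑ θ with a ∈ θ, (∏ i ∈ θ, f i) * ∏ i ∈ θᶜ, g i
      = ∑ θ, (∏ i ∈ θ, f i) * ∏ i ∈ θᶜ, Function.update g a 0 i := by
        simp only [sum_filter, hkill, mul_ite, mul_zero]
    _ = ∏ i, (f i + Function.update g a 0 i) := (Fintype.prod_add _ _).symm
    _ = f a * ∏ i ∈ {a}ᶜ, (f i + g i) := by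
        rw [Fintype.prod_eq_mul_prod_compl a, Function.update_self, add_zero]
        congr 1
        exact prod_congr rfl fun i hi =>
          by rw [Function.update_of_ne (by simpa using hi)]

theorem sum_filter_mem_bernoulliWeight (p : ι → ℝ) (a : ι) :
    ∑ θ with a ∈ θ, bernoulliWeight p θ = p a := by
  simp only [bernoulliWeight, sum_filter_mem_prod_mul_prod_compl, add_sub_cancel,
    prod_const_one, mul_one]

end BernoulliWeight

section Supervisor

variable {X E : Type*} [Fintype E]

theorem PDES.w_nonneg (G : PDES X E) (s : List E) (σ : E) : 0 ≤ G.w s σ := by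
  unfold PDES.w
  cases G.transStar s with
  | none => exact le_rfl
  | some x => exact G.prob_nonneg x σ

variable [DecidableEq E]

theorem PDES.lang_pos_of_kLang_ne_zero (G : PDES X E) (So : Finset E) (K : List E → E → ℝ)
    {s : List E} (hs : kLang G So K s ≠ 0) : 0 < G.lang s :=
  langOf_pos_of_ne_zero
    (fun s σ h => (G.w_nonneg s σ).lt_of_ne' (left_ne_zero_of_mul h)) s hs

theorem kLang_congr (G : PDES X E) (So : Finset E) {K K' : List E → E → ℝ}
    (h : ∀ s, 0 < G.lang s → ∀ σ, K (proj So s) σ = K' (proj So s) σ) :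
    kLang G So K = kLang G So K' :=
  langOf_congr fun s σ hs => by rw [h s (G.lang_pos_of_kLang_ne_zero So K hs) σ]

theorem mem_controlPatterns {Sc θ : Finset E} : θ ∈ ControlPatterns Sc ↔ Scᶜ ⊆ θ := by
  simp [ControlPatterns]

def enableProb (Sc : Finset E) (Sp : List E → Finset E → ℝ) (t : List E) (σ : E) : ℝ :=
  ∑ θ ∈ (ControlPatterns Sc).filter (fun θ => σ ∈ θ), Sp t θ

theorem supLang_eq_kLang_enableProb (G : PDES X E) (Sc So : Finset E)
    (Sp : List E → Finset E → ℝ) : supLang G Sc So Sp = kLang G So (enableProb Sc Sp) :=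
  rfl

theorem IsSupervisor.isScaling_enableProb {G : PDES X E} {Sc So : Finset E}
    {Sp : List E → Finset E → ℝ} (hSp : IsSupervisor G Sc So Sp) :
    IsScaling G Sc So (enableProb Sc Sp) := by
  intro s hs σ
  obtain ⟨hnonneg, hsum⟩ := hSp s hs
  refine ⟨sum_nonneg fun θ hθ => hnonneg θ (mem_filter.1 hθ).1, ?_, fun hσ => ?_⟩
  · rw [← hsum]
    exact sum_le_sum_of_subset_of_nonneg (filter_subset _ _) fun θ hθ _ => hnonneg θ hθ
  · rw [enableProb, filter_true_of_mem fun θ hθ =>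
      mem_controlPatterns.1 hθ (mem_compl.2 hσ), hsum]

variable {Sc : Finset E}

theorem sum_controlPatterns_bernoulliWeight {p : E → ℝ} (hp : ∀ σ ∉ Sc, p σ = 1) :
    ∑ θ ∈ ControlPatterns Sc, bernoulliWeight p θ = 1 := by
  rw [← sum_bernoulliWeight p]
  refine sum_subset (subset_univ _) fun θ _ hθ => ?_
  obtain ⟨σ, hσ, hσθ⟩ := not_subset.1 (mt mem_controlPatterns.2 hθ)
  exact bernoulliWeight_eq_zero hσθ (hp σ (mem_compl.1 hσ))

theorem enableProb_bernoulliWeight {P : List E → E → ℝ} (hP : ∀ t, ∀ σ ∉ Sc, P t σ = 1) :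
    enableProb Sc (fun t => bernoulliWeight (P t)) = P := by
  funext t σ
  rw [enableProb, ← sum_filter_mem_bernoulliWeight (P t) σ]
  refine sum_subset (filter_subset_filter _ (subset_univ _)) fun θ hθ hθ' => ?_
  obtain ⟨τ, hτ, hτθ⟩ := not_subset.1 fun h =>
    hθ' (mem_filter.2 ⟨mem_controlPatterns.2 h, (mem_filter.1 hθ).2⟩)
  exact bernoulliWeight_eq_zero hτθ (hP t τ (mem_compl.1 hτ))

theorem IsScaling.isSupervisor_bernoulliWeight {G : PDES X E} {So : Finset E}
    {K : List E → E → ℝ} (hK : IsScaling G Sc So K) :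
    IsSupervisor G Sc So fun t => bernoulliWeight fun σ => if σ ∈ Sc then K t σ else 1 := by
  intro s hs
  refine ⟨fun θ _ => bernoulliWeight_nonneg (fun σ => ?_) (fun σ => ?_) θ,
    sum_controlPatterns_bernoulliWeight fun σ hσ => if_neg hσ⟩
  · split_ifs
    exacts [(hK s hs σ).1, zero_le_one]
  · split_ifs
    exacts [(hK s hs σ).2.1, le_rfl]

end Supervisor

theorem supervisor_iff_scaling_general {X E : Type*} [Fintype E] [DecidableEq E]
    (G : PDES X E) (Sc So : Finset E) (L : PLang E) :
    (∃ Sp : List E → Finset E → ℝ,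
        IsSupervisor G Sc So Sp ∧ supLang G Sc So Sp = L.toFun) ↔
    (∃ K : List E → E → ℝ,
        IsScaling G Sc So K ∧ kLang G So K = L.toFun) := by
  constructor
  · rintro ⟨Sp, hSp, hL⟩
    exact ⟨enableProb Sc Sp, hSp.isScaling_enableProb, hL⟩
  · rintro ⟨K, hK, hL⟩
    -- `K` is only constrained on the support of `L_G`; make it `1` off `Sc` everywhere
    let P t σ := if σ ∈ Sc then K t σ else 1
    refine ⟨fun t => bernoulliWeight (P t), hK.isSupervisor_bernoulliWeight, ?_⟩
    rw [supLang_eq_kLang_enableProb, enableProb_bernoulliWeight fun t σ hσ => if_neg hσ, ← hL]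
    refine kLang_congr G So fun s hs σ => ?_
    by_cases hσ : σ ∈ Sc
    · exact if_pos hσ
    · exact (if_neg hσ).trans ((hK s hs σ).2.2 hσ).symm

/-- there is a probabilistic P-supervisor achieving `L` iff there is a
scaling-factor function achieving `L`. -/
theorem supervisor_iff_scaling {X E : Type*} [Fintype E] [DecidableEq E]
    (G : PDES X E) (Sc So : Finset E) (L : PLang E)
    (hsub : PSub L.toFun G.lang) :
    (∃ Sp : List E → Finset E → ℝ,
        IsSupervisor G Sc So Sp ∧ supLang G Sc So Sp = L.toFun) ↔
    (∃ K : List E → E → ℝ,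
        IsScaling G Sc So K ∧ kLang G So K = L.toFun) :=
  supervisor_iff_scaling_general G Sc So L
end

section
/- Correctness of the observability-verification algorithm: Let G = (X, x0, Σ, δ, ρ) be a PDES with controllable events Σc and observable events Σo, and H = (Q, q0, Σ, δH, ρH) a probabilistic automaton with L_H ⊆ L_G, and let G_to be the associated observability-testing automaton. Then L_H is not probabilistic observable w.r.t. G, Σc and Σo if and only if the state d of G_to is reachable from the initial state (x0, q0, x0, q0). -/
open scoped BigOperators

/-!
Two strings `s₁, s₂` with `P s₁ = P s₂` can be read together as a run of `G_to`: an
unobservable letter of either string moves only its own half of the state, a common observable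
letter moves both halves at once. Such a run can only be cut short by a diversion to `d`, and
that happens exactly at a controllable event violating the observability equation at the states
reached so far. Conversely, every run of `G_to` spells out such a pair of strings, and both lie
in the support of `L_H` because they reach states of `H`.
-/

section Projection

variable {E : Type*} [DecidableEq E] {So : Finset E}

theorem proj_append (s t : List E) : proj So (s ++ t) = proj So s ++ proj So t :=
  List.filter_append _ _

theorem proj_append_singleton_of_mem {σ : E} (hσ : σ ∈ So) (s : List E) :
    proj So (s ++ [σ]) = proj So s ++ [σ] := by
  simp [proj, hσ]

theorem proj_append_singleton_of_notMem {σ : E} (hσ : σ ∉ So) (s : List E) :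
    proj So (s ++ [σ]) = proj So s := by
  simp [proj, hσ]

theorem proj_eq_induction {motive : (s₁ s₂ : List E) → proj So s₁ = proj So s₂ → Prop}
    (nil : motive [] [] rfl)
    (left : ∀ s₁ s₂ σ (hσ : σ ∉ So) (h : proj So s₁ = proj So s₂), motive s₁ s₂ h →
      motive (s₁ ++ [σ]) s₂ ((proj_append_singleton_of_notMem hσ s₁).trans h))
    (right : ∀ s₁ s₂ σ (hσ : σ ∉ So) (h : proj So s₁ = proj So s₂), motive s₁ s₂ h →
      motive s₁ (s₂ ++ [σ]) (h.trans (proj_append_singleton_of_notMem hσ s₂).symm))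
    (sync : ∀ s₁ s₂ σ, σ ∈ So → ∀ h : proj So s₁ = proj So s₂, motive s₁ s₂ h →
      motive (s₁ ++ [σ]) (s₂ ++ [σ]) (by rw [proj_append, proj_append, h]))
    (s₁ s₂ : List E) (h : proj So s₁ = proj So s₂) : motive s₁ s₂ h := by
  induction s₁ using List.reverseRecOn generalizing s₂ with
  | nil =>
    induction s₂ using List.reverseRecOn with
    | nil => exact nil
    | append_singleton t₂ τ ih =>
      by_cases hτ : τ ∈ So
      · simp [proj, hτ] at h
      · exact right _ _ τ hτ _ (ih ((proj_append_singleton_of_notMem hτ t₂).symm ▸ h))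
  | append_singleton t₁ σ ih₁ =>
    by_cases hσ : σ ∈ So
    · induction s₂ using List.reverseRecOn with
      | nil => simp [proj, hσ] at h
      | append_singleton t₂ τ ih₂ =>
        by_cases hτ : τ ∈ So
        · rw [proj_append_singleton_of_mem hσ, proj_append_singleton_of_mem hτ] at h
          obtain ⟨hproj, rfl⟩ : proj So t₁ = proj So t₂ ∧ σ = τ := by simpa using h
          exact sync _ _ σ hσ hproj (ih₁ t₂ hproj)
        · exact right _ _ τ hτ _ (ih₂ ((proj_append_singleton_of_notMem hτ t₂).symm ▸ h))
    · exact left _ _ σ hσ _ (ih₁ s₂ (proj_append_singleton_of_notMem hσ t₁ ▸ h))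

end Projection

namespace PDES

variable {X E : Type*} [Fintype E] (G : PDES X E)

@[simp]
theorem transStar_nil : G.transStar [] = some G.x0 := rfl

theorem transStar_append_singleton_eq_some {s : List E} {σ : E} {x' : X} :
    G.transStar (s ++ [σ]) = some x' ↔ ∃ x, G.transStar s = some x ∧ G.trans x σ = some x' := by
  simp [transStar, List.foldl_append, Option.bind_eq_some_iff]

theorem lang_append_singleton (s : List E) (σ : E) :
    G.lang (s ++ [σ]) = G.lang s * G.w s σ := by
  suffices ∀ pre, chainProd G.w pre (s ++ [σ]) = chainProd G.w pre s * G.w (pre ++ s) σ from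
    this []
  induction s with
  | nil => simp [chainProd]
  | cons a t ih => intro pre; simp [chainProd, ih, mul_assoc]

theorem lang_pos_of_transStar_eq_some {s : List E} {x : X} (h : G.transStar s = some x) :
    0 < G.lang s := by
  induction s using List.reverseRecOn generalizing x with
  | nil => simp [lang, langOf, chainProd]
  | append_singleton s σ ih =>
    obtain ⟨y, hy, hσ⟩ := G.transStar_append_singleton_eq_some.1 h
    have hw : 0 < G.w s σ := by simp [w, hy, G.prob_pos_iff, hσ]
    rw [lang_append_singleton]
    exact mul_pos (ih hy) hw

end PDES

section ObservabilityTest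

variable {X Q E : Type*} [Fintype E] [DecidableEq E] {G : PDES X E} {H : PDES Q E}
  {Sc So : Finset E}

theorem ToReach.exists_proj_eq {x₁ : X} {q₁ : Q} {x₂ : X} {q₂ : Q}
    (h : ToReach G H Sc So (Sum.inl (x₁, q₁, x₂, q₂))) :
    ∃ s₁ s₂, proj So s₁ = proj So s₂ ∧
      G.transStar s₁ = some x₁ ∧ H.transStar s₁ = some q₁ ∧
      G.transStar s₂ = some x₂ ∧ H.transStar s₂ = some q₂ := by
  generalize hst : Sum.inl (x₁, q₁, x₂, q₂) = st at h
  induction h generalizing x₁ q₁ x₂ q₂ with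
  | init => cases hst; exact ⟨[], [], rfl, rfl, rfl, rfl, rfl⟩
  | sync _ _ _ _ _ _ _ _ σ _ hx₁ hq₁ hx₂ hq₂ _ ih =>
    cases hst
    obtain ⟨s₁, s₂, hproj, h₁, h₂, h₃, h₄⟩ := ih rfl
    refine ⟨s₁ ++ [σ], s₂ ++ [σ], by rw [proj_append, proj_append, hproj], ?_, ?_, ?_, ?_⟩
    · exact G.transStar_append_singleton_eq_some.2 ⟨_, h₁, hx₁⟩
    · exact H.transStar_append_singleton_eq_some.2 ⟨_, h₂, hq₁⟩
    · exact G.transStar_append_singleton_eq_some.2 ⟨_, h₃, hx₂⟩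
    · exact H.transStar_append_singleton_eq_some.2 ⟨_, h₄, hq₂⟩
  | bad => cases hst
  | left _ _ _ _ _ _ σ _ hσ hx₁ hq₁ ih =>
    cases hst
    obtain ⟨s₁, s₂, hproj, h₁, h₂, h₃, h₄⟩ := ih rfl
    refine ⟨s₁ ++ [σ], s₂, ?_, ?_, ?_, h₃, h₄⟩
    · rwa [proj_append_singleton_of_notMem hσ]
    · exact G.transStar_append_singleton_eq_some.2 ⟨_, h₁, hx₁⟩
    · exact H.transStar_append_singleton_eq_some.2 ⟨_, h₂, hq₁⟩
  | right _ _ _ _ _ _ σ _ hσ hx₂ hq₂ ih =>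
    cases hst
    obtain ⟨s₁, s₂, hproj, h₁, h₂, h₃, h₄⟩ := ih rfl
    refine ⟨s₁, s₂ ++ [σ], ?_, h₁, h₂, ?_, ?_⟩
    · rwa [proj_append_singleton_of_notMem hσ]
    · exact G.transStar_append_singleton_eq_some.2 ⟨_, h₃, hx₂⟩
    · exact H.transStar_append_singleton_eq_some.2 ⟨_, h₄, hq₂⟩

theorem toReach_of_proj_eq (hd : ¬ ToReach G H Sc So (Sum.inr ())) {s₁ s₂ : List E}
    (hproj : proj So s₁ = proj So s₂) {x₁ : X} {q₁ : Q} {x₂ : X} {q₂ : Q}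
    (h₁ : G.transStar s₁ = some x₁) (h₂ : H.transStar s₁ = some q₁)
    (h₃ : G.transStar s₂ = some x₂) (h₄ : H.transStar s₂ = some q₂) :
    ToReach G H Sc So (Sum.inl (x₁, q₁, x₂, q₂)) := by
  induction s₁, s₂, hproj using proj_eq_induction generalizing x₁ q₁ x₂ q₂ with
  | nil =>
    simp only [PDES.transStar_nil, Option.some.injEq] at h₁ h₂ h₃ h₄
    subst h₁ h₂ h₃ h₄
    exact .init
  | left s₁ s₂ σ hσ _ ih =>
    obtain ⟨x, hx, hσx⟩ := G.transStar_append_singleton_eq_some.1 h₁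
    obtain ⟨q, hq, hσq⟩ := H.transStar_append_singleton_eq_some.1 h₂
    exact .left _ _ _ _ _ _ σ (ih hx hq h₃ h₄) hσ hσx hσq
  | right s₁ s₂ σ hσ _ ih =>
    obtain ⟨x, hx, hσx⟩ := G.transStar_append_singleton_eq_some.1 h₃
    obtain ⟨q, hq, hσq⟩ := H.transStar_append_singleton_eq_some.1 h₄
    exact .right _ _ _ _ _ _ σ (ih h₁ h₂ hx hq) hσ hσx hσq
  | sync s₁ s₂ σ _ _ ih =>
    obtain ⟨x, hx, hσx⟩ := G.transStar_append_singleton_eq_some.1 h₁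
    obtain ⟨q, hq, hσq⟩ := H.transStar_append_singleton_eq_some.1 h₂
    obtain ⟨x', hx', hσx'⟩ := G.transStar_append_singleton_eq_some.1 h₃
    obtain ⟨q', hq', hσq'⟩ := H.transStar_append_singleton_eq_some.1 h₄
    have hr := ih hx hq hx' hq'
    refine .sync _ _ _ _ _ _ _ _ σ hr hσx hσq hσx' hσq' ?_
    by_cases hc : σ ∈ Sc
    · exact .inr ⟨hc, not_not.1 fun hne => hd (.bad _ _ _ _ σ hr hc hne)⟩
    · exact .inl hc

end ObservabilityTest

theorem not_observable_iff_d_reachable_general {X Q E : Type*} [Fintype E] [DecidableEq E]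
    (G : PDES X E) (H : PDES Q E) (Sc So : Finset E) :
    ¬ AutObservable G H Sc So ↔ ToReach G H Sc So (Sum.inr ()) := by
  constructor
  · intro hno
    by_contra hd
    refine hno fun s₁ s₂ _ _ hproj x₁ q₁ x₂ q₂ h₁ h₂ h₃ h₄ σ hσ => ?_
    by_contra hne
    exact hd (.bad _ _ _ _ σ (toReach_of_proj_eq hd hproj h₁ h₂ h₃ h₄) hσ hne)
  · intro hd hobs
    cases hd with
    | bad x₁ q₁ x₂ q₂ σ hr hσ hne =>
      obtain ⟨s₁, s₂, hproj, h₁, h₂, h₃, h₄⟩ := hr.exists_proj_eq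
      exact hne (hobs s₁ s₂ (H.lang_pos_of_transStar_eq_some h₂)
        (H.lang_pos_of_transStar_eq_some h₄) hproj _ _ _ _ h₁ h₂ h₃ h₄ σ hσ)

/-- correctness of the observability-verification algorithm. -/
theorem not_observable_iff_d_reachable {X Q E : Type*} [Fintype E] [DecidableEq E]
    (G : PDES X E) (H : PDES Q E) (Sc So : Finset E)
    (hsub : PSub H.lang G.lang) :
    ¬ AutObservable G H Sc So ↔ ToReach G H Sc So (Sum.inr ()) :=
  not_observable_iff_d_reachable_general G H Sc So
end

section
/- If L and M are probabilistic languages over Σ with L ⊆ M and L is probabilistic controllable w.r.t. M and Σc, then the support language supp(L) is controllable w.r.t. supp(M) and Σc in the ordinary (nonprobabilistic) sense: for every s ∈ supp(L) and σ ∈ Σuc, if sσ ∈ supp(M) then sσ ∈ supp(L). -/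
open scoped BigOperators

theorem ProbControllable.pos_append {E : Type*} {L M : List E → ℝ} {Sc : Finset E}
    (hc : ProbControllable L M Sc) {s : List E} (hLs : 0 < L s) (hMs : 0 < M s)
    {σ : E} (hσ : σ ∉ Sc) (hM : 0 < M (s ++ [σ])) : 0 < L (s ++ [σ]) := by
  have hratio : 0 < L (s ++ [σ]) / L s := hc s hLs σ hσ ▸ div_pos hM hMs
  exact (div_pos_iff_of_pos_right hLs).mp hratio

/-- probabilistic controllability implies ordinary controllability
of the support languages. -/
theorem probControllable_supp_controllable {E : Type*} [Fintype E]
    (L M : PLang E) (Sc : Finset E)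
    (hsub : PSub L.toFun M.toFun)
    (hc : ProbControllable L.toFun M.toFun Sc) :
    ∀ s : List E, 0 < L.toFun s → ∀ σ : E, σ ∉ Sc →
      0 < M.toFun (s ++ [σ]) → 0 < L.toFun (s ++ [σ]) :=
  fun s hLs _ hσ hM => hc.pos_append hLs (hsub.1 s hLs) hσ hM
end

section
/- If L and M are probabilistic languages over Σ with L ⊆ M and L is probabilistic observable w.r.t. M, Σc and Σo, then the support language supp(L) is observable w.r.t. supp(M), Σc and Σo in the ordinary (nonprobabilistic) sense: for all s1, s2 ∈ supp(L) with P(s1) = P(s2) and every σ ∈ Σc, if s1σ ∈ supp(L) and s2σ ∈ supp(M) then s2σ ∈ supp(L). -/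
open scoped BigOperators

/-- probabilistic observability implies ordinary observability
of the support languages. -/
theorem probObservable_supp_observable {E : Type*} [Fintype E] [DecidableEq E]
    (L M : PLang E) (Sc So : Finset E)
    (hsub : PSub L.toFun M.toFun)
    (ho : ProbObservable L.toFun M.toFun Sc So) :
    ∀ s1 s2 : List E, 0 < L.toFun s1 → 0 < L.toFun s2 →
      proj So s1 = proj So s2 → ∀ σ ∈ Sc,
        0 < L.toFun (s1 ++ [σ]) → 0 < M.toFun (s2 ++ [σ]) →
        0 < L.toFun (s2 ++ [σ]) := by
  intro s1 s2 hL1 hL2 hproj σ hσ hL1σ hM2σ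
  -- The right-hand side of the observability identity is a product of positive ratios,
  -- so the factor `L(s2σ)/L(s2)` on its left-hand side cannot vanish.
  have hrhs : 0 < M.toFun (s2 ++ [σ]) / M.toFun s2 * (L.toFun (s1 ++ [σ]) / L.toFun s1) :=
    mul_pos (div_pos hM2σ (hsub.1 s2 hL2)) (div_pos hL1σ hL1)
  have hratio : L.toFun (s2 ++ [σ]) / L.toFun s2 ≠ 0 :=
    right_ne_zero_of_mul (ho s1 s2 hL1 hL2 hproj σ hσ ▸ hrhs).ne'
  exact (L.nonneg _).lt_of_ne' (div_ne_zero_iff.mp hratio).1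
end

section
/- Let L1, L2 and M be probabilistic languages over Σ with L1 ⊆ M and L2 ⊆ M. If L1 and L2 are both probabilistic controllable w.r.t. M and Σc, then L1 ∩ L2 is probabilistic controllable w.r.t. M and Σc. -/
open scoped BigOperators

/-! On the support of `L1 ∩ L2` the one-step ratio of the intersection is the minimum of the
ratios of `L1` and `L2`; after an uncontrollable event both of these equal the ratio of `M`. -/

theorem chainProd_append {E : Type*} (w : List E → E → ℝ) (s : List E) (σ : E) :
    ∀ pre, chainProd w pre (s ++ [σ]) = chainProd w pre s * w (pre ++ s) σ := by
  induction s with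
  | nil => intro pre; simp [chainProd]
  | cons a t ih =>
      intro pre
      show w pre a * chainProd w (pre ++ [a]) (t ++ [σ]) = _
      rw [ih (pre ++ [a]), List.append_assoc]
      simp [chainProd, mul_assoc]

theorem langOf_append {E : Type*} (w : List E → E → ℝ) (s : List E) (σ : E) :
    langOf w (s ++ [σ]) = langOf w s * w s σ := by
  simpa [langOf] using chainProd_append w s σ []

section pInter

variable {E : Type*} (L1 L2 : List E → ℝ)

theorem pInter_append (s : List E) (σ : E) :
    pInter L1 L2 (s ++ [σ]) =
      pInter L1 L2 s * min (L1 (s ++ [σ]) / L1 s) (L2 (s ++ [σ]) / L2 s) :=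
  langOf_append _ s σ

theorem pInter_append_div {s : List E} (hs : pInter L1 L2 s ≠ 0) (σ : E) :
    pInter L1 L2 (s ++ [σ]) / pInter L1 L2 s =
      min (L1 (s ++ [σ]) / L1 s) (L2 (s ++ [σ]) / L2 s) := by
  rw [pInter_append, mul_div_cancel_left₀ _ hs]

variable {L1 L2}

theorem pos_of_pInter_pos (hn1 : ∀ s, 0 ≤ L1 s) (hn2 : ∀ s, 0 ≤ L2 s)
    (hε1 : 0 < L1 []) (hε2 : 0 < L2 []) {s : List E} (hs : 0 < pInter L1 L2 s) :
    0 < L1 s ∧ 0 < L2 s := by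
  induction s using List.reverseRecOn with
  | nil => exact ⟨hε1, hε2⟩
  | append_singleton t σ ih =>
      rw [pInter_append] at hs
      have hmin : 0 ≤ min (L1 (t ++ [σ]) / L1 t) (L2 (t ++ [σ]) / L2 t) :=
        le_min (div_nonneg (hn1 _) (hn1 _)) (div_nonneg (hn2 _) (hn2 _))
      have ht : 0 < pInter L1 L2 t := pos_of_mul_pos_left hs hmin
      obtain ⟨h1, h2⟩ := ih ht
      obtain ⟨hr1, hr2⟩ := lt_min_iff.mp (pos_of_mul_pos_right hs ht.le)
      exact ⟨(div_pos_iff_of_pos_right h1).mp hr1, (div_pos_iff_of_pos_right h2).mp hr2⟩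

end pInter

theorem PLang.pos_of_pInter_pos {E : Type*} [Fintype E] (L1 L2 : PLang E) {s : List E}
    (hs : 0 < pInter L1.toFun L2.toFun s) : 0 < L1.toFun s ∧ 0 < L2.toFun s :=
  _root_.pos_of_pInter_pos L1.nonneg L2.nonneg (L1.eps ▸ one_pos) (L2.eps ▸ one_pos) hs

theorem pInter_probControllable_general {E : Type*} [Fintype E]
    (L1 L2 M : PLang E) (Sc : Finset E)
    (hc1 : ProbControllable L1.toFun M.toFun Sc)
    (hc2 : ProbControllable L2.toFun M.toFun Sc) :
    ProbControllable (pInter L1.toFun L2.toFun) M.toFun Sc := by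
  intro s hs σ hσ
  obtain ⟨h1, h2⟩ := L1.pos_of_pInter_pos L2 hs
  rw [pInter_append_div _ _ hs.ne', hc1 s h1 σ hσ, hc2 s h2 σ hσ, min_self]

/-- probabilistic controllability is closed under intersection. -/
theorem pInter_probControllable {E : Type*} [Fintype E]
    (L1 L2 M : PLang E) (Sc : Finset E)
    (h1 : PSub L1.toFun M.toFun) (h2 : PSub L2.toFun M.toFun)
    (hc1 : ProbControllable L1.toFun M.toFun Sc)
    (hc2 : ProbControllable L2.toFun M.toFun Sc) :
    ProbControllable (pInter L1.toFun L2.toFun) M.toFun Sc :=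
  pInter_probControllable_general L1 L2 M Sc hc1 hc2
end
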